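/- Let X be a σ-compact locally compact Hausdorff space, ν a Borel measure on X finite on compact sets, H a complex Hilbert space, and ψ : X → H a total family such that for every f ∈ H the function x ↦ ⟨ψ_x, f⟩ is ν-measurable and locally ν-integrable. Let C be the analysis operator (domain Dom(C) = {f : x ↦ ⟨ψ_x, f⟩ ∈ L²(X, ν)}) and D the weakly defined synthesis operator, and assume Dom(C) is dense in H. Then: (i) D ⊆ C*, i.e. Dom(D) ⊆ Dom(C*) and C* F = D F for all F ∈ Dom(D); in particular D is closable. (ii) D is closed if and only if D = C*; and in that case the operator S := C*C is self-adjoint in H. -/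

import Mathlib

/-!
`D ⊆ C*` is the weak definition of `D` tested against `f ∈ Dom(C)`; as the graph of `C*` is
closed and `Dom(C)` is dense, `D` is closable, and `D = C*` forces `D` to be closed. If `D` is
closed, its graph is its own double orthogonal complement, so `C* ⊆ D` reduces to: if
`⟪D F, h⟫ = ⟪F, G⟫` for all `F ∈ Dom(D)`, then `⟪ψ ·, h⟫ = G` a.e. Testing with `F = 1_K`, `K`
compact (it lies in `Dom(D)` because `f ↦ ∫_K ⟪ψ x, f⟫` is bounded by the closed graph theorem),
shows that both sides have the same integral over every compact set. Finally `C` is closed, so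
projecting `(w, 0)` onto its graph solves `(1 + C*C) f = w`, and a symmetric `S` with `1 + S`
onto is self-adjoint.
-/

open MeasureTheory Filter
open scoped ComplexInnerProductSpace ENNReal

namespace SemiFrames4

variable {X : Type*} [TopologicalSpace X] [MeasurableSpace X] (ν : Measure X)
  {H : Type*} [NormedAddCommGroup H] [InnerProductSpace ℂ H] [CompleteSpace H]
  (ψ : X → H)

/-- `(F, g)` belongs to the graph of the weakly defined synthesis operator `D`:
`∫ conj(F x) ⟪ψ x, f⟫ dν = ⟪g, f⟫` for every `f ∈ H`, the integrand being integrable. -/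
def IsSynth (F : Lp ℂ 2 ν) (g : H) : Prop :=
  ∀ f : H, Integrable (fun x => (starRingEnd ℂ) (F x) * ⟪ψ x, f⟫) ν ∧
    ∫ x, (starRingEnd ℂ) (F x) * ⟪ψ x, f⟫ ∂ν = ⟪g, f⟫

/-- `(F, g)` belongs to the graph of the adjoint `C*` of the analysis operator `C`:
`⟪g, f⟫ = ⟪F, C f⟫` for every `f ∈ Dom(C)`. -/
def MemGraphAdjC (F : Lp ℂ 2 ν) (g : H) : Prop :=
  ∀ (f : H) (hf : MemLp (fun x => ⟪ψ x, f⟫) 2 ν),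
    ⟪g, f⟫ = ⟪F, hf.toLp (fun x => ⟪ψ x, f⟫)⟫

/-- `(f, h)` belongs to the graph of `S = C*C`: `f ∈ Dom(C)` and `(C f, h)` belongs to the
graph of `C*`. -/
def MemGraphS (f h : H) : Prop :=
  ∃ hf : MemLp (fun x => ⟪ψ x, f⟫) 2 ν,
    MemGraphAdjC ν ψ (hf.toLp (fun x => ⟪ψ x, f⟫)) h

end SemiFrames4

theorem rel_of_forall_inner_eq {𝕜 E : Type*} [RCLike 𝕜] [NormedAddCommGroup E]
    [InnerProductSpace 𝕜 E] {S : E → E → Prop}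
    (hsymm : ∀ {f h f' h'}, S f h → S f' h' → inner 𝕜 h f' = inner 𝕜 f h')
    (hsurj : ∀ w, ∃ f, S f (w - f)) {f h : E}
    (hfh : ∀ f' h', S f' h' → inner 𝕜 h f' = inner 𝕜 f h') : S f h := by
  obtain ⟨u, hu⟩ := hsurj (f + h)
  obtain ⟨v, hv⟩ := hsurj (f - u)
  have h₁ : inner 𝕜 h v = inner 𝕜 f (f - u - v) := hfh v _ hv
  have h₂ : inner 𝕜 (f + h - u) v = inner 𝕜 u (f - u - v) := hsymm hu hv
  have hfu : inner 𝕜 (f - u) (f - u) = 0 := by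
    simp only [inner_sub_left, inner_sub_right, inner_add_left] at h₁ h₂ ⊢
    linear_combination h₂ - h₁
  obtain rfl : f = u := sub_eq_zero.mp (inner_self_eq_zero.mp hfu)
  simpa using hu

namespace SemiFrames4

variable {X : Type*} [MeasurableSpace X] {ν : Measure X}
  {H : Type*} [NormedAddCommGroup H] [InnerProductSpace ℂ H] {ψ : X → H}

theorem inner_toLp_eq_integral (F : Lp ℂ 2 ν) {φ : X → ℂ} (hφ : MemLp φ 2 ν) :
    ⟪F, hφ.toLp φ⟫ = ∫ x, (starRingEnd ℂ) (F x) * φ x ∂ν := by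
  rw [L2.inner_def]
  refine integral_congr_ae ?_
  filter_upwards [hφ.coeFn_toLp] with x hx
  rw [hx, RCLike.inner_apply, mul_comm]

theorem IsSynth.memGraphAdjC {F : Lp ℂ 2 ν} {g : H} (h : IsSynth ν ψ F g) :
    MemGraphAdjC ν ψ F g := fun f hf => by
  rw [inner_toLp_eq_integral, (h f).2]

theorem MemGraphAdjC.of_tendsto {F : ℕ → Lp ℂ 2 ν} {g : ℕ → H} {F₀ : Lp ℂ 2 ν} {g₀ : H}
    (hFg : ∀ n, MemGraphAdjC ν ψ (F n) (g n)) (hF : Tendsto F atTop (nhds F₀))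
    (hg : Tendsto g atTop (nhds g₀)) : MemGraphAdjC ν ψ F₀ g₀ := fun f hf =>
  tendsto_nhds_unique (hg.inner tendsto_const_nhds)
    ((hF.inner tendsto_const_nhds).congr fun n => (hFg n f hf).symm)

theorem MemGraphAdjC.eq_zero_of_dense (hdense : Dense {f : H | MemLp (fun x => ⟪ψ x, f⟫) 2 ν})
    {g : H} (h : MemGraphAdjC ν ψ 0 g) : g = 0 :=
  hdense.eq_zero_of_inner_left ℂ fun f hf => by rw [h f hf, inner_zero_left]

theorem MemGraphS.inner_eq {f h f' h' : H} (hS : MemGraphS ν ψ f h)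
    (hS' : MemGraphS ν ψ f' h') : ⟪h, f'⟫ = ⟪f, h'⟫ := by
  obtain ⟨hf, hadj⟩ := hS
  obtain ⟨hf', hadj'⟩ := hS'
  rw [hadj f' hf', ← inner_conj_symm, ← hadj' f hf, inner_conj_symm]

theorem coeff_ae_eq_of_tendsto {p : ℝ≥0∞} [Fact (1 ≤ p)] {μ : Measure X} {u : ℕ → H} {f : H}
    {F : ℕ → Lp ℂ p μ} {F₀ : Lp ℂ p μ} (hu : Tendsto u atTop (nhds f))
    (hF : Tendsto F atTop (nhds F₀)) (hFu : ∀ n, F n =ᵐ[μ] fun x => ⟪ψ x, u n⟫) :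
    F₀ =ᵐ[μ] fun x => ⟪ψ x, f⟫ := by
  obtain ⟨ns, hns, hae⟩ := (tendstoInMeasure_of_tendsto_Lp hF).exists_seq_tendsto_ae
  filter_upwards [hae, ae_all_iff.2 hFu] with x hx hxu
  refine tendsto_nhds_unique hx ?_
  simp_rw [hxu]
  exact tendsto_const_nhds.inner (hu.comp hns.tendsto_atTop)

theorem IsSynth.add {F F' : Lp ℂ 2 ν} {g g' : H} (h : IsSynth ν ψ F g)
    (h' : IsSynth ν ψ F' g') : IsSynth ν ψ (F + F') (g + g') := fun f => by
  have hae : (fun x => (starRingEnd ℂ) (F x) * ⟪ψ x, f⟫ + (starRingEnd ℂ) (F' x) * ⟪ψ x, f⟫)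
      =ᵐ[ν] fun x => (starRingEnd ℂ) ((F + F' : Lp ℂ 2 ν) x) * ⟪ψ x, f⟫ := by
    filter_upwards [Lp.coeFn_add F F'] with x hx
    rw [hx, Pi.add_apply, map_add, add_mul]
  refine ⟨((h f).1.add (h' f).1).congr hae, ?_⟩
  rw [← integral_congr_ae hae, integral_add (h f).1 (h' f).1, (h f).2, (h' f).2, inner_add_left]

theorem IsSynth.smul {F : Lp ℂ 2 ν} {g : H} (c : ℂ) (h : IsSynth ν ψ F g) :
    IsSynth ν ψ (c • F) (c • g) := fun f => by
  have hae : (fun x => (starRingEnd ℂ) c * ((starRingEnd ℂ) (F x) * ⟪ψ x, f⟫))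
      =ᵐ[ν] fun x => (starRingEnd ℂ) ((c • F : Lp ℂ 2 ν) x) * ⟪ψ x, f⟫ := by
    filter_upwards [Lp.coeFn_smul c F] with x hx
    rw [hx, Pi.smul_apply, smul_eq_mul, map_mul, mul_assoc]
  refine ⟨((h f).1.const_mul _).congr hae, ?_⟩
  rw [← integral_congr_ae hae, integral_const_mul, (h f).2, inner_smul_left]

theorem isSynth_zero : IsSynth ν ψ 0 0 := fun f => by
  have hae : (0 : X → ℂ) =ᵐ[ν] fun x => (starRingEnd ℂ) ((0 : Lp ℂ 2 ν) x) * ⟪ψ x, f⟫ := by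
    filter_upwards [Lp.coeFn_zero ℂ 2 ν] with x hx
    rw [hx, Pi.zero_apply, map_zero, zero_mul]
  exact ⟨(integrable_zero _ _ _).congr hae, by rw [← integral_congr_ae hae, integral_zero',
    inner_zero_left]⟩

variable (ν ψ) in
def graphD : Submodule ℂ (WithLp 2 (Lp ℂ 2 ν × H)) where
  carrier := {q | IsSynth ν ψ q.fst q.snd}
  add_mem' ha hb := ha.add hb
  zero_mem' := isSynth_zero
  smul_mem' c _ hq := hq.smul c

variable (ν ψ) in
def graphC : Submodule ℂ (WithLp 2 (H × Lp ℂ 2 ν)) where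
  carrier := {q | (q.snd : X → ℂ) =ᵐ[ν] fun x => ⟪ψ x, q.fst⟫}
  add_mem' {a b} ha hb := by
    change _ =ᵐ[ν] _ at ha hb ⊢
    filter_upwards [Lp.coeFn_add a.snd b.snd, ha, hb] with x h₁ h₂ h₃
    simp only [WithLp.add_snd, WithLp.add_fst, h₁, Pi.add_apply, h₂, h₃,
      inner_add_right]
  zero_mem' := by
    filter_upwards [Lp.coeFn_zero ℂ 2 ν] with x hx
    simp only [WithLp.zero_snd, hx, WithLp.zero_fst, Pi.zero_apply, inner_zero_right]
  smul_mem' c a ha := by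
    change _ =ᵐ[ν] _ at ha ⊢
    filter_upwards [Lp.coeFn_smul c a.snd, ha] with x h₁ h₂
    simp only [WithLp.smul_snd, WithLp.smul_fst, h₁, Pi.smul_apply, h₂, inner_smul_right,
      smul_eq_mul]

theorem isClosed_graphC : IsClosed (graphC ν ψ : Set (WithLp 2 (H × Lp ℂ 2 ν))) :=
  IsSeqClosed.isClosed fun _ _ hq hlim =>
    coeff_ae_eq_of_tendsto ((WithLp.continuous_fst 2 _ _).tendsto _ |>.comp hlim)
      ((WithLp.continuous_snd 2 _ _).tendsto _ |>.comp hlim) hq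

section

variable [CompleteSpace H]

noncomputable def coeffLp (p : ℝ≥0∞) [Fact (1 ≤ p)] (μ : Measure X)
    (hψ : ∀ f : H, MemLp (fun x => ⟪ψ x, f⟫) p μ) : H →L[ℂ] Lp ℂ p μ :=
  let L : H →ₗ[ℂ] Lp ℂ p μ :=
    { toFun := fun f => (hψ f).toLp _
      map_add' := fun f f' => Lp.ext <| by
        filter_upwards [(hψ (f + f')).coeFn_toLp, (hψ f).coeFn_toLp, (hψ f').coeFn_toLp,
          Lp.coeFn_add ((hψ f).toLp _) ((hψ f').toLp _)] with x h₁ h₂ h₃ h₄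
        rw [h₁, h₄, Pi.add_apply, h₂, h₃, inner_add_right]
      map_smul' := fun c f => Lp.ext <| by
        filter_upwards [(hψ (c • f)).coeFn_toLp, (hψ f).coeFn_toLp,
          Lp.coeFn_smul c ((hψ f).toLp _)] with x h₁ h₂ h₃
        rw [h₁, RingHom.id_apply, h₃, Pi.smul_apply, h₂, inner_smul_right, smul_eq_mul] }
  ⟨L, L.continuous_of_seq_closed_graph fun u f F hu hF => Lp.ext <|
    (coeff_ae_eq_of_tendsto hu hF fun n => (hψ (u n)).coeFn_toLp).trans (hψ f).coeFn_toLp.symm⟩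

theorem coeffLp_ae_eq {p : ℝ≥0∞} [Fact (1 ≤ p)] {μ : Measure X}
    (hψ : ∀ f : H, MemLp (fun x => ⟪ψ x, f⟫) p μ) (f : H) :
    coeffLp p μ hψ f =ᵐ[μ] fun x => ⟪ψ x, f⟫ :=
  (hψ f).coeFn_toLp

theorem exists_memGraphS_sub (w : H) : ∃ f, MemGraphS ν ψ f (w - f) := by
  have : CompleteSpace (graphC ν ψ) := isClosed_graphC.completeSpace_coe
  have hq := (graphC ν ψ).starProjection_apply_mem (WithLp.toLp 2 (w, 0))
  have horth := fun f (hf : MemLp (fun x => ⟪ψ x, f⟫) 2 ν) =>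
    Submodule.inner_left_of_mem_orthogonal
      (show WithLp.toLp 2 (f, hf.toLp _) ∈ graphC ν ψ from hf.coeFn_toLp)
      (Submodule.sub_starProjection_mem_orthogonal (WithLp.toLp 2 (w, 0)))
  generalize (graphC ν ψ).starProjection (WithLp.toLp 2 (w, 0)) = q at hq horth
  change (q.snd : X → ℂ) =ᵐ[ν] _ at hq
  have hmem : MemLp (fun x => ⟪ψ x, q.fst⟫) 2 ν := (Lp.memLp q.snd).ae_eq hq
  refine ⟨q.fst, hmem, fun f hf => ?_⟩
  have hf_orth := horth f hf
  rw [show hmem.toLp _ = q.snd from Lp.ext (hmem.coeFn_toLp.trans hq.symm)]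
  simp only [WithLp.prod_inner_apply, WithLp.ofLp_sub, Prod.fst_sub, Prod.snd_sub,
    WithLp.ofLp_fst, WithLp.ofLp_snd, zero_sub, inner_neg_left] at hf_orth
  linear_combination hf_orth

section

variable [TopologicalSpace X] [T2Space X] [BorelSpace X] [IsFiniteMeasureOnCompacts ν]

theorem exists_isSynth_indicatorConstLp
    (hloc : ∀ (f : H) (K : Set X), IsCompact K → IntegrableOn (fun x => ⟪ψ x, f⟫) K ν)
    {K : Set X} (hK : IsCompact K) :
    ∃ g : H, IsSynth ν ψ (indicatorConstLp 2 hK.measurableSet hK.measure_lt_top.ne 1) g ∧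
      ∀ f, ⟪g, f⟫ = ∫ x in K, ⟪ψ x, f⟫ ∂ν := by
  have hψK (f : H) : MemLp (fun x => ⟪ψ x, f⟫) 1 (ν.restrict K) :=
    memLp_one_iff_integrable.2 (hloc f K hK)
  set Λ : StrongDual ℂ H := (L1.integralCLM' ℂ).comp (coeffLp 1 (ν.restrict K) hψK)
  have hΛ (f : H) : Λ f = ∫ x in K, ⟪ψ x, f⟫ ∂ν := by
    rw [ContinuousLinearMap.comp_apply, ← L1.integral_eq', L1.integral_eq_integral]
    exact integral_congr_ae (coeffLp_ae_eq hψK f)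
  have hind (f : H) : (fun x => (starRingEnd ℂ)
      (indicatorConstLp 2 hK.measurableSet (hK.measure_lt_top (μ := ν)).ne (1 : ℂ) x) * ⟪ψ x, f⟫)
      =ᵐ[ν] K.indicator fun x => ⟪ψ x, f⟫ := by
    filter_upwards [indicatorConstLp_coeFn (p := 2) (hs := hK.measurableSet)
      (hμs := (hK.measure_lt_top (μ := ν)).ne) (c := (1 : ℂ))] with x hx
    by_cases hxK : x ∈ K <;> simp [hx, hxK]
  refine ⟨(InnerProductSpace.toDual ℂ H).symm Λ, fun f => ⟨?_, ?_⟩, fun f => ?_⟩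
  · exact ((integrable_indicator_iff hK.measurableSet).2 (hloc f K hK)).congr (hind f).symm
  · rw [integral_congr_ae (hind f), integral_indicator hK.measurableSet,
      InnerProductSpace.toDual_symm_apply, hΛ]
  · rw [InnerProductSpace.toDual_symm_apply, hΛ]

theorem coeff_ae_eq_of_forall_isSynth [LocallyCompactSpace X] [SigmaCompactSpace X]
    (hloc : ∀ (f : H) (K : Set X), IsCompact K → IntegrableOn (fun x => ⟪ψ x, f⟫) K ν)
    {h : H} {G : Lp ℂ 2 ν} (hDadj : ∀ F g, IsSynth ν ψ F g → ⟪g, h⟫ = ⟪F, G⟫) :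
    (fun x => ⟪ψ x, h⟫) =ᵐ[ν] G := by
  have hφ : LocallyIntegrable (fun x => ⟪ψ x, h⟫) ν := locallyIntegrable_iff.2 (hloc h)
  have hG : LocallyIntegrable G ν := (Lp.memLp G).locallyIntegrable one_le_two
  refine (sub_ae_eq_zero _ _).1 <| ae_eq_zero_of_forall_setIntegral_isCompact_eq_zero' (hφ.sub hG)
    fun K hK => ?_
  obtain ⟨g, hg, hgK⟩ := exists_isSynth_indicatorConstLp hloc hK
  rw [Pi.sub_def, integral_sub (hloc h K hK) (hG.integrableOn_isCompact hK), ← hgK,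
    hDadj _ _ hg, L2.inner_indicatorConstLp_one, sub_self]

theorem MemGraphAdjC.isSynth [LocallyCompactSpace X] [SigmaCompactSpace X]
    (hloc : ∀ (f : H) (K : Set X), IsCompact K → IntegrableOn (fun x => ⟪ψ x, f⟫) K ν)
    (hclosed : ∀ (F : ℕ → Lp ℂ 2 ν) (g : ℕ → H) (Flim : Lp ℂ 2 ν) (glim : H),
        (∀ n, IsSynth ν ψ (F n) (g n)) →
        Tendsto F atTop (nhds Flim) → Tendsto g atTop (nhds glim) → IsSynth ν ψ Flim glim)
    {F₀ : Lp ℂ 2 ν} {g₀ : H} (hadj : MemGraphAdjC ν ψ F₀ g₀) : IsSynth ν ψ F₀ g₀ := by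
  have : IsClosed (graphD ν ψ : Set (WithLp 2 (Lp ℂ 2 ν × H))) :=
    IsSeqClosed.isClosed fun _ _ hq hlim => hclosed _ _ _ _ hq
      ((WithLp.continuous_fst 2 _ _).tendsto _ |>.comp hlim)
      ((WithLp.continuous_snd 2 _ _).tendsto _ |>.comp hlim)
  have : CompleteSpace (graphD ν ψ) := this.completeSpace_coe
  change WithLp.toLp 2 (F₀, g₀) ∈ graphD ν ψ
  rw [← (graphD ν ψ).orthogonal_orthogonal, Submodule.mem_orthogonal']
  intro u hu
  have hDadj (F : Lp ℂ 2 ν) (g : H) (hFg : IsSynth ν ψ F g) : ⟪g, u.snd⟫ = ⟪F, -u.fst⟫ := by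
    have := Submodule.inner_right_of_mem_orthogonal (u := WithLp.toLp 2 (F, g)) hFg hu
    simp only [WithLp.prod_inner_apply, WithLp.ofLp_fst, WithLp.ofLp_snd] at this
    rw [inner_neg_right]
    linear_combination this
  have hcoeff := coeff_ae_eq_of_forall_isSynth hloc hDadj
  have hmem : MemLp (fun x => ⟪ψ x, u.snd⟫) 2 ν := (Lp.memLp _).ae_eq hcoeff.symm
  have := hadj u.snd hmem
  rw [Lp.ext (hmem.coeFn_toLp.trans hcoeff), inner_neg_right] at this
  simp only [WithLp.prod_inner_apply, WithLp.ofLp_fst, WithLp.ofLp_snd]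
  linear_combination this

end

end

theorem synthesis_subset_adjoint_and_closed_iff_general
    {X : Type*} [TopologicalSpace X] [T2Space X] [LocallyCompactSpace X] [SigmaCompactSpace X]
    [MeasurableSpace X] [BorelSpace X] (ν : Measure X) [IsFiniteMeasureOnCompacts ν]
    {H : Type*} [NormedAddCommGroup H] [InnerProductSpace ℂ H] [CompleteSpace H]
    (ψ : X → H)
    (hloc : ∀ (f : H) (K : Set X), IsCompact K →
      IntegrableOn (fun x => ⟪ψ x, f⟫) K ν)
    (hdense : Dense {f : H | MemLp (fun x => ⟪ψ x, f⟫) 2 ν}) :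
    -- (i) D ⊆ C*
    (∀ (F : Lp ℂ 2 ν) (g : H), IsSynth ν ψ F g → MemGraphAdjC ν ψ F g) ∧
    -- in particular D is closable
    (∀ (F : ℕ → Lp ℂ 2 ν) (g : ℕ → H) (glim : H),
        (∀ n, IsSynth ν ψ (F n) (g n)) →
        Tendsto F atTop (nhds 0) → Tendsto g atTop (nhds glim) → glim = 0) ∧
    -- (ii) D is closed iff D = C*
    ((∀ (F : ℕ → Lp ℂ 2 ν) (g : ℕ → H) (Flim : Lp ℂ 2 ν) (glim : H),
        (∀ n, IsSynth ν ψ (F n) (g n)) →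
        Tendsto F atTop (nhds Flim) → Tendsto g atTop (nhds glim) →
        IsSynth ν ψ Flim glim) ↔
      (∀ (F : Lp ℂ 2 ν) (g : H), IsSynth ν ψ F g ↔ MemGraphAdjC ν ψ F g)) ∧
    -- and in that case S = C*C is self-adjoint
    ((∀ (F : Lp ℂ 2 ν) (g : H), IsSynth ν ψ F g ↔ MemGraphAdjC ν ψ F g) →
      ∀ f h : H, MemGraphS ν ψ f h ↔
        (∀ f' h' : H, MemGraphS ν ψ f' h' → ⟪h, f'⟫ = ⟪f, h'⟫)) := by
  have hsub (F : Lp ℂ 2 ν) (g : H) : IsSynth ν ψ F g → MemGraphAdjC ν ψ F g :=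
    IsSynth.memGraphAdjC
  refine ⟨hsub, fun F g glim hFg hF hg => ?_,
    ⟨fun hclosed F g => ⟨hsub F g, MemGraphAdjC.isSynth hloc hclosed⟩, ?_⟩, fun _ f h => ⟨?_, ?_⟩⟩
  · exact (MemGraphAdjC.of_tendsto (fun n => hsub _ _ (hFg n)) hF hg).eq_zero_of_dense hdense
  · intro hD F g Flim glim hFg hF hg
    exact (hD Flim glim).2 (.of_tendsto (fun n => hsub _ _ (hFg n)) hF hg)
  · exact fun hS f' h' hS' => hS.inner_eq hS'
  · exact rel_of_forall_inner_eq (fun hS hS' => hS.inner_eq hS') exists_memGraphS_sub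

/-- Under the hypotheses of the locally compact σ-compact setting, with
`ψ` total, coefficient functions measurable and locally integrable and `Dom(C)` dense:
(i) `D ⊆ C*`, and `D` is closable; (ii) `D` is closed iff `D = C*`, and in that case the
operator `S = C*C` is self-adjoint (its graph equals the graph of its adjoint). -/
theorem synthesis_subset_adjoint_and_closed_iff
    {X : Type*} [TopologicalSpace X] [T2Space X] [LocallyCompactSpace X] [SigmaCompactSpace X]
    [MeasurableSpace X] [BorelSpace X] (ν : Measure X) [IsFiniteMeasureOnCompacts ν]
    {H : Type*} [NormedAddCommGroup H] [InnerProductSpace ℂ H] [CompleteSpace H]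
    (ψ : X → H)
    (hmeas : ∀ f : H, AEMeasurable (fun x => ⟪ψ x, f⟫) ν)
    (hloc : ∀ (f : H) (K : Set X), IsCompact K →
      IntegrableOn (fun x => ⟪ψ x, f⟫) K ν)
    (htotal : (Submodule.span ℂ (Set.range ψ)).topologicalClosure = ⊤)
    (hdense : Dense {f : H | MemLp (fun x => ⟪ψ x, f⟫) 2 ν}) :
    -- (i) D ⊆ C*
    (∀ (F : Lp ℂ 2 ν) (g : H), IsSynth ν ψ F g → MemGraphAdjC ν ψ F g) ∧
    -- in particular D is closable
    (∀ (F : ℕ → Lp ℂ 2 ν) (g : ℕ → H) (glim : H),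
        (∀ n, IsSynth ν ψ (F n) (g n)) →
        Tendsto F atTop (nhds 0) → Tendsto g atTop (nhds glim) → glim = 0) ∧
    -- (ii) D is closed iff D = C*
    ((∀ (F : ℕ → Lp ℂ 2 ν) (g : ℕ → H) (Flim : Lp ℂ 2 ν) (glim : H),
        (∀ n, IsSynth ν ψ (F n) (g n)) →
        Tendsto F atTop (nhds Flim) → Tendsto g atTop (nhds glim) →
        IsSynth ν ψ Flim glim) ↔
      (∀ (F : Lp ℂ 2 ν) (g : H), IsSynth ν ψ F g ↔ MemGraphAdjC ν ψ F g)) ∧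
    -- and in that case S = C*C is self-adjoint
    ((∀ (F : Lp ℂ 2 ν) (g : H), IsSynth ν ψ F g ↔ MemGraphAdjC ν ψ F g) →
      ∀ f h : H, MemGraphS ν ψ f h ↔
        (∀ f' h' : H, MemGraphS ν ψ f' h' → ⟪h, f'⟫ = ⟪f, h'⟫)) :=
  synthesis_subset_adjoint_and_closed_iff_general ν ψ hloc hdense

end SemiFrames4
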